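/- arXiv:nlin/0202035 — 2 statements merged into one kernel-verified Lean document; each statement's English description precedes it below -/
import Mathlib

section
/- Fix integers g ≥ 1 and m with 1 ≤ m ≤ g. Let b_1, …, b_{2g+1} ∈ ℂ, set f(z) := ∏_{i=1}^{2g+1}(z − b_i) and a_k := b_k for k = 1, …, g, and assume a_1, …, a_g are pairwise distinct. Let x_1, …, x_m be pairwise distinct complex numbers with x_i ∉ {b_1, …, b_{2g+1}} and x_i ∉ {a_1, …, a_g} for all i, and let y_1, …, y_m ∈ ℂ satisfy y_i² = f(x_i) (so y_i ≠ 0). Let M be the m×m matrix with M_{k l} = 1/(x_l − a_k), let 𝒬 be the diagonal matrix with entries Q(x_1)/y_1, …, Q(x_m)/y_m, where Q(z) := ∏_{k=1}^{g}(z − a_k), and let 𝒜 be the diagonal matrix with entries Q′(a_1), …, Q′(a_m), where Q′(a_j) := ∏_{1≤k≤g, k≠j}(a_j − a_k). Then M𝒬 is invertible and the (i, j) entry of (M𝒬)⁻¹𝒜 equals y_i · F(a_j) · Q^{(2)}(a_j) / ( F′(x_i) · Q^{(2)}(x_i) · (a_j − x_i) ), where F(z) := ∏_{i=1}^{m}(z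 − x_i), F′(x_i) := ∏_{k≠i}(x_i − x_k) and Q^{(2)}(z) := ∏_{k=m+1}^{g}(z − a_k) (an empty product is 1). -/
/-!
Since `Q(z) = (z - a k) Q₁ₖ(z) Q²(z)` with `Q₁ₖ = ∏_{l < m, l ≠ k} (z - a l)`, the entries of
row `k` of `M𝒬` are `Q₁ₖ(x i) Q²(x i) / y i`: up to the diagonal scaling `Q²(x i) / y i`, row `k`
samples the polynomial `Q₁ₖ`, of degree `< m`, at the nodes `x i`. Lagrange interpolation at these
nodes, evaluated at `a j`, undoes the sampling, and `Q₁ₖ(a j)` vanishes for `j ≠ k` and equals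
`Q'(a k) / Q²(a k)` for `j = k`. This exhibits the claimed matrix as a right inverse of `M𝒬`
times `𝒜`, which is invertible because the `a k` are distinct.
-/

open Finset Polynomial

section

variable {K ι : Type*} [Field K] [Fintype ι] [DecidableEq ι]

theorem Lagrange.eval_eq_sum_eval_mul_prod_div {x : ι → K} (hx : Function.Injective x) {P : K[X]}
    (hP : P.degree < Fintype.card ι) (t : K) :
    P.eval t = ∑ i, P.eval (x i) *
      ((∏ l ∈ univ.erase i, (t - x l)) / ∏ l ∈ univ.erase i, (x i - x l)) := by
  conv_lhs => rw [eq_interpolate (s := univ) (f := P) hx.injOn (by simpa using hP)]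
  simp only [interpolate_apply, eval_finsetSum, eval_mul, eval_C, Lagrange.basis, eval_prod,
    basisDivisor, eval_sub, eval_X, prod_mul_distrib, prod_inv_distrib]
  exact sum_congr rfl fun i _ => by rw [div_eq_mul_inv, mul_comm (∏ l ∈ _, _)]

/-- Inverse of the Cauchy matrix up to the diagonal `Q'(c j)`, where `Q = ∏ l, (z - c l)`. -/
theorem cauchy_mul_eq_diagonal {x c : ι → K} (hx : Function.Injective x)
    (hxc : ∀ i k, x i ≠ c k) :
    (Matrix.of fun k l => 1 / (x l - c k)) *
        Matrix.of (fun i j => (∏ l, (x i - c l)) * (∏ l, (c j - x l)) /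
          ((∏ l ∈ univ.erase i, (x i - x l)) * (c j - x i))) =
      Matrix.diagonal fun j => ∏ l ∈ univ.erase j, (c j - c l) := by
  ext k j
  have hdeg : (Lagrange.nodal (univ.erase k) c).degree < Fintype.card ι := by
    rw [Lagrange.degree_nodal, card_erase_of_mem (mem_univ k), card_univ]
    exact_mod_cast Nat.sub_lt (Fintype.card_pos_iff.2 ⟨k⟩) one_pos
  have hF' : ∀ i, ∏ l ∈ univ.erase i, (x i - x l) ≠ 0 := fun i =>
    prod_ne_zero_iff.2 fun l hl => sub_ne_zero.2 fun h => (mem_erase.1 hl).1 (hx h).symm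
  calc ∑ i, (1 / (x i - c k)) * ((∏ l, (x i - c l)) * (∏ l, (c j - x l)) /
          ((∏ l ∈ univ.erase i, (x i - x l)) * (c j - x i)))
      = ∑ i, (Lagrange.nodal (univ.erase k) c).eval (x i) *
          ((∏ l ∈ univ.erase i, (c j - x l)) / ∏ l ∈ univ.erase i, (x i - x l)) := by
        refine sum_congr rfl fun i _ => ?_
        rw [Lagrange.eval_nodal, ← mul_prod_erase univ _ (mem_univ k),
          ← mul_prod_erase univ (fun l => c j - x l) (mem_univ i)]
        field_simp [hF' i, sub_ne_zero.2 (hxc i k), sub_ne_zero.2 (hxc i j).symm]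
    _ = (Lagrange.nodal (univ.erase k) c).eval (c j) :=
        (Lagrange.eval_eq_sum_eval_mul_prod_div hx hdeg (c j)).symm
    _ = _ := by
        rw [Lagrange.eval_nodal]
        rcases eq_or_ne k j with rfl | hkj
        · rw [Matrix.diagonal_apply_eq]
        · rw [Matrix.diagonal_apply_ne _ hkj]
          exact prod_eq_zero (mem_erase.2 ⟨hkj.symm, mem_univ j⟩) (sub_self _)

end

namespace Fin

variable {M : Type*} [CommMonoid M] {m g : ℕ} (h : m ≤ g) (f : Fin g → M)

theorem filter_lt_eq_map_castLEEmb :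
    univ.filter (fun k : Fin g => (k : ℕ) < m) = univ.map (castLEEmb h) := by
  ext k
  simp only [mem_filter, mem_univ, true_and, mem_map, castLEEmb_apply]
  exact ⟨fun hk => ⟨⟨k, hk⟩, rfl⟩, by rintro ⟨u, rfl⟩; exact u.isLt⟩

theorem prod_univ_eq_prod_castLE_mul_prod_filter_le :
    ∏ k, f k = (∏ k : Fin m, f (castLE h k)) *
      ∏ k ∈ univ.filter (fun k : Fin g => m ≤ (k : ℕ)), f k := by
  rw [← prod_filter_mul_prod_filter_not univ (fun k : Fin g => (k : ℕ) < m),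
    filter_lt_eq_map_castLEEmb h, prod_map]
  simp only [castLEEmb_apply, not_lt]

theorem prod_erase_castLE_eq_prod_erase_mul_prod_filter_le (j : Fin m) :
    ∏ k ∈ univ.erase (castLE h j), f k = (∏ k ∈ univ.erase j, f (castLE h k)) *
      ∏ k ∈ univ.filter (fun k : Fin g => m ≤ (k : ℕ)), f k := by
  rw [← prod_filter_mul_prod_filter_not (univ.erase _) (fun k : Fin g => (k : ℕ) < m),
    filter_erase, filter_erase, filter_lt_eq_map_castLEEmb h, ← castLEEmb_apply h,
    ← map_erase, prod_map, erase_eq_of_notMem (s := univ.filter fun k : Fin g => ¬(k : ℕ) < m) 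
    (by simp)]
  simp only [castLEEmb_apply, not_lt]

end Fin

theorem Matrix.isUnit_and_inv_mul_eq_of_mul_eq {n R : Type*} [Fintype n] [DecidableEq n]
    [CommRing R] {X G A : Matrix n n R} (h : X * G = A) (hA : IsUnit A) :
    IsUnit X ∧ X⁻¹ * A = G := by
  have hX : IsUnit X.det := by
    rw [isUnit_iff_isUnit_det, ← h, det_mul] at hA
    exact isUnit_of_mul_isUnit_left hA
  exact ⟨(isUnit_iff_isUnit_det X).2 hX, by rw [← h, ← Matrix.mul_assoc, nonsing_inv_mul _ hX,
    Matrix.one_mul]⟩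

/-- Lemma 2.2(3), formula (2.8):
`(M𝒬)⁻¹𝒜 = [ y_i F(a_j) Q²(a_j) / (F'(x_i) Q²(x_i) (a_j - x_i)) ]_{ij}`,
where `M k l = 1/(x l - a k)`, `𝒬 = diag(Q(x_i)/y_i)`, `𝒜 = diag(Q'(a_j))`,
`Q(z) = ∏_{k=1}^{g} (z - a k)`, `Q²(z) = ∏_{k=m+1}^{g} (z - a k)`,
`F(z) = ∏ (z - x i)`, and `y_i² = f(x_i)` on the curve `y² = f(x)`. -/
theorem cauchy_matrix_formula (g m : ℕ) (hmg : m ≤ g)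
    (b : Fin (2 * g + 1) → ℂ) (a : Fin g → ℂ)
    (hainj : Function.Injective a)
    (x : Fin m → ℂ) (hxinj : Function.Injective x)
    (hxb : ∀ i k, x i ≠ b k) (hxa : ∀ i k, x i ≠ a k)
    (y : Fin m → ℂ) (hy : ∀ i, (y i) ^ 2 = ∏ k, (x i - b k))
    (M Q A : Matrix (Fin m) (Fin m) ℂ)
    (hM : ∀ k l, M k l = 1 / (x l - a (Fin.castLE hmg k)))
    (hQ : Q = Matrix.diagonal fun i => (∏ k : Fin g, (x i - a k)) / y i)
    (hA : A = Matrix.diagonal fun j =>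
      ∏ k ∈ Finset.univ.erase (Fin.castLE hmg j), (a (Fin.castLE hmg j) - a k)) :
    IsUnit (M * Q) ∧ ∀ i j, ((M * Q)⁻¹ * A) i j =
      y i * (∏ k : Fin m, (a (Fin.castLE hmg j) - x k)) *
          (∏ k ∈ Finset.univ.filter fun k : Fin g => m ≤ (k : ℕ),
            (a (Fin.castLE hmg j) - a k)) /
        ((∏ k ∈ Finset.univ.erase i, (x i - x k)) *
          (∏ k ∈ Finset.univ.filter fun k : Fin g => m ≤ (k : ℕ), (x i - a k)) *
          (a (Fin.castLE hmg j) - x i)) := by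
  set c : Fin m → ℂ := fun k => a (Fin.castLE hmg k)
  set Q₂ : ℂ → ℂ := fun z => ∏ k ∈ univ.filter fun k : Fin g => m ≤ (k : ℕ), (z - a k)
  have hy0 : ∀ i, y i ≠ 0 := fun i hi => by
    have hf := hy i
    rw [hi, zero_pow two_ne_zero] at hf
    exact prod_ne_zero_iff.2 (fun k _ => sub_ne_zero.2 (hxb i k)) hf.symm
  have hQ₂ : ∀ i, Q₂ (x i) ≠ 0 := fun i => prod_ne_zero_iff.2 fun k _ => sub_ne_zero.2 (hxa i k)
  set G : Matrix (Fin m) (Fin m) ℂ := Matrix.of fun i j =>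
    y i * (∏ k, (c j - x k)) * Q₂ (c j) /
      ((∏ k ∈ univ.erase i, (x i - x k)) * Q₂ (x i) * (c j - x i))
  have hQG : Q * G = Matrix.of (fun i j => (∏ l, (x i - c l)) * (∏ l, (c j - x l)) /
        ((∏ l ∈ univ.erase i, (x i - x l)) * (c j - x i))) * Matrix.diagonal fun j => Q₂ (c j) := by
    ext i j
    simp only [hQ, G, Matrix.diagonal_mul, Matrix.mul_diagonal, Matrix.of_apply]
    rw [Fin.prod_univ_eq_prod_castLE_mul_prod_filter_le hmg]
    field_simp [hy0 i, hQ₂ i]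
    ring
  have hMQG : M * Q * G = A := by
    rw [show M = Matrix.of fun k l => 1 / (x l - c k) from Matrix.ext hM, Matrix.mul_assoc, hQG,
      ← Matrix.mul_assoc, cauchy_mul_eq_diagonal hxinj fun i k => hxa i _,
      Matrix.diagonal_mul_diagonal, hA]
    simp only [c, Q₂, Fin.prod_erase_castLE_eq_prod_erase_mul_prod_filter_le hmg]
  have hAunit : IsUnit A := by
    rw [hA, Matrix.isUnit_diagonal, Pi.isUnit_iff]
    exact fun j => isUnit_iff_ne_zero.2 <| prod_ne_zero_iff.2 fun k hk =>
      sub_ne_zero.2 fun h => (mem_erase.1 hk).1 (hainj h).symm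
  obtain ⟨hunit, hinv⟩ := Matrix.isUnit_and_inv_mul_eq_of_mul_eq hMQG hAunit
  exact ⟨hunit, fun i j => by rw [hinv]; rfl⟩
end

section
/- Fix integers g ≥ 1 and m with 2 ≤ m ≤ g. Let b_1, …, b_{2g+1} ∈ ℂ, set f(z) := ∏_{i=1}^{2g+1}(z − b_i) and a_k := b_k for k = 1, …, g, and assume the points a_1, a_2, a_{m+1}, …, a_g are pairwise distinct. Let x_1, …, x_m be pairwise distinct complex numbers with x_i ∉ {a_1, a_2, a_{m+1}, …, a_g} for all i. Set F(z) := ∏_{i=1}^{m}(z − x_i), let F′ denote its derivative polynomial, Q^{(2)}(z) := ∏_{k=m+1}^{g}(z − a_k) (empty product = 1), Q^{(2)′}(a_k) := ∏_{m+1≤l≤g, l≠k}(a_k − a_l), and define, on a neighborhood of each x_i on which the denominator is nonvanishing, the function G(z) := f(z) / ( (z − a_1)² (z − a_2)² Q^{(2)}(z)² F′(z) ). Then Σ_{i=1}^{m} G′(x_i)/F′(x_i) = − [ f′(a_1)/( (a_1 − a_2)² F(a_1)² Q^{(2)}(a_1)² ) + f′(a_2)/( (a_1 − a_2)² F(a_2)²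 Q^{(2)}(a_2)² ) + Σ_{k=m+1}^{g} f′(a_k)/( (a_k − a_1)² (a_k − a_2)² F(a_k)² Q^{(2)′}(a_k)² ) ], where G′ is the complex derivative of G and f′ the derivative polynomial of f. (Equivalently: the sum over all poles in ℂ of the residues of the rational function f(z)/((z − a_1)²(z − a_2)² F(z)² Q^{(2)}(z)²) vanishes, its residue at each double pole x_i being G′(x_i)/F′(x_i), and there is no residue at infinity.) -/
/-
The points x_i together with the roots a₁, a₂, a_{m+1}, …, a_g of f are n = g + 2 distinct nodes
p_j, and the identity says that the residues of f / W², W = ∏ (z - p_j), add up to zero; there is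
no residue at infinity because deg f = 2g + 1 ≤ 2n - 2. The residue at p_j is the derivative of
f / V_j² at p_j, where V_j = W / (z - p_j): at a root of f it is f'(p_j) / V_j(p_j)², and at x_i
it is G'(x_i) / F'(x_i).

The vanishing is proved by Hermite interpolation: f = ∑_j (f(p_j) / V_j(p_j)² + r_j (z - p_j)) V_j²
with r_j the residue at p_j, because the difference is divisible by W² and has degree < 2n.
Comparing the coefficients of z^(2n - 1) gives ∑_j r_j = 0.
-/

open Finset Polynomial Lagrange

theorem Set.InjOn.sumElim_disjSum {α ι κ : Type*} {t : Finset ι} {u : Finset κ}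
    {x : ι → α} {a : κ → α} (hx : Set.InjOn x t) (ha : Set.InjOn a u)
    (hxa : ∀ i ∈ t, ∀ k ∈ u, x i ≠ a k) : Set.InjOn (Sum.elim x a) (t.disjSum u) := by
  rintro (i | k) hi (j | l) hj h <;>
    simp only [mem_coe, inl_mem_disjSum, inr_mem_disjSum, Sum.elim_inl, Sum.elim_inr] at hi hj h
  · exact congrArg _ (hx hi hj h)
  · exact (hxa i hi l hj h).elim
  · exact (hxa j hj k hi h.symm).elim
  · exact congrArg _ (ha hi hj h)

theorem Fin.card_filter_le_val {n m : ℕ} : #{k : Fin n | m ≤ (k : ℕ)} = n - m := by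
  have := card_filter_add_card_filter_not (s := (univ : Finset (Fin n))) (fun k => (k : ℕ) < m)
  simp only [not_lt, Fin.card_filter_val_lt, card_univ, Fintype.card_fin] at this
  omega

theorem nodal_disjSum {R ι κ : Type*} [CommRing R] {t : Finset ι} {u : Finset κ}
    {x : ι → R} {a : κ → R} : nodal (t.disjSum u) (Sum.elim x a) = nodal t x * nodal u a :=
  prod_disjSum _ _ _

theorem sq_X_sub_C_dvd_of_isRoot_of_isRoot_derivative {R : Type*} [CommRing R] {P : R[X]}
    {c : R} (h : P.IsRoot c) (h' : P.derivative.IsRoot c) : (X - C c) ^ 2 ∣ P := by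
  rcases eq_or_ne P 0 with rfl | hP
  · exact dvd_zero _
  · exact (le_rootMultiplicity_iff hP).1 ((one_lt_rootMultiplicity_iff_isRoot hP).2 ⟨h, h'⟩)

noncomputable section

variable {K : Type*} [Field K]

/-- The residue at `c` of `P / ((X - c) V)²`, i.e. the derivative of `P / V²` at `c`. -/
def doublePoleResidue (P V : K[X]) (c : K) : K :=
  (P.derivative.eval c * V.eval c - 2 * P.eval c * V.derivative.eval c) / V.eval c ^ 3

theorem doublePoleResidue_of_isRoot {P : K[X]} {c : K} (h : P.IsRoot c) (V : K[X]) :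
    doublePoleResidue P V c = P.derivative.eval c / V.eval c ^ 2 := by
  rw [doublePoleResidue, h.eq_zero]
  rcases eq_or_ne (V.eval c) 0 with hV | hV
  · simp [hV]
  · field_simp
    ring

section Hermite

variable {ι : Type*} [DecidableEq ι] {s : Finset ι} {v : ι → K} {i j : ι}

/-- The summand of the Hermite interpolant of `P` on the nodes `v '' s` belonging to `v i`: it
agrees with `P` to first order at `v i` and vanishes to second order at the other nodes. -/
def hermiteTerm (P : K[X]) (s : Finset ι) (v : ι → K) (i : ι) : K[X] :=
  (C (P.eval (v i) / (nodal (s.erase i) v).eval (v i) ^ 2) +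
      C (doublePoleResidue P (nodal (s.erase i) v) (v i)) * (X - C (v i))) *
    nodal (s.erase i) v ^ 2

theorem sq_X_sub_C_dvd_hermiteTerm (P : K[X]) (hj : j ∈ s) (hij : i ≠ j) :
    (X - C (v j)) ^ 2 ∣ hermiteTerm P s v i :=
  Dvd.dvd.mul_left (pow_dvd_pow_of_dvd (X_sub_C_dvd_nodal v (mem_erase.2 ⟨hij.symm, hj⟩)) 2) _

theorem sq_X_sub_C_dvd_sub_hermiteTerm (P : K[X]) (hv : Set.InjOn v s) (hi : i ∈ s) :
    (X - C (v i)) ^ 2 ∣ P - hermiteTerm P s v i := by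
  have hV : (nodal (s.erase i) v).eval (v i) ≠ 0 := eval_nodal_not_at_node fun j hj h =>
    (mem_erase.1 hj).1 (hv (mem_erase.1 hj).2 hi h.symm)
  apply sq_X_sub_C_dvd_of_isRoot_of_isRoot_derivative
  · simp only [IsRoot, hermiteTerm, eval_sub, eval_mul, eval_add, eval_C, eval_pow, eval_X,
      sub_self, mul_zero, add_zero]
    field_simp
    ring
  · simp only [IsRoot, hermiteTerm, derivative_sub, derivative_mul, derivative_add, derivative_C,
      derivative_X, derivative_pow, eval_sub, eval_add, eval_mul, eval_C, eval_pow, eval_X,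
      sub_self, zero_mul, zero_add, mul_zero, sub_zero, add_zero, mul_one,
      doublePoleResidue]
    field_simp
    ring

theorem nodal_sq_dvd_sub_sum_hermiteTerm (P : K[X]) (hv : Set.InjOn v s) :
    nodal s v ^ 2 ∣ P - ∑ i ∈ s, hermiteTerm P s v i := by
  rw [nodal, ← prod_pow]
  refine prod_dvd_of_coprime (fun i hi j hj hij => ?_) fun j hj => ?_
  · exact (isCoprime_X_sub_C_of_isUnit_sub
      (sub_ne_zero.2 fun h => hij (hv hi hj h)).isUnit).pow
  · rw [← add_sum_erase _ _ hj, ← sub_sub]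
    exact dvd_sub (sq_X_sub_C_dvd_sub_hermiteTerm P hv hj)
      (dvd_sum fun i hi => sq_X_sub_C_dvd_hermiteTerm P hj (mem_erase.1 hi).1)

theorem natDegree_nodal_erase_sq (hi : i ∈ s) :
    (nodal (s.erase i) v ^ 2).natDegree = 2 * #s - 2 := by
  rw [natDegree_pow, natDegree_nodal, card_erase_of_mem hi]
  omega

theorem natDegree_hermiteTerm_le (P : K[X]) (hi : i ∈ s) :
    (hermiteTerm P s v i).natDegree ≤ 2 * #s - 1 := by
  have hs : 0 < #s := card_pos.2 ⟨i, hi⟩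
  have hlin : (C (P.eval (v i) / (nodal (s.erase i) v).eval (v i) ^ 2) +
      C (doublePoleResidue P (nodal (s.erase i) v) (v i)) * (X - C (v i))).natDegree ≤ 1 := by
    compute_degree
  have := natDegree_mul_le.trans (add_le_add hlin (natDegree_nodal_erase_sq (v := v) hi).le)
  rw [hermiteTerm]
  omega

theorem coeff_hermiteTerm (P : K[X]) (hi : i ∈ s) :
    (hermiteTerm P s v i).coeff (2 * #s - 1) = doublePoleResidue P (nodal (s.erase i) v) (v i) := by
  have hs : 0 < #s := card_pos.2 ⟨i, hi⟩
  have hmonic : ((X - C (v i)) * nodal (s.erase i) v ^ 2).Monic :=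
    (monic_X_sub_C _).mul (nodal_monic.pow 2)
  have hdeg : ((X - C (v i)) * nodal (s.erase i) v ^ 2).natDegree = 2 * #s - 1 := by
    rw [(monic_X_sub_C _).natDegree_mul (nodal_monic.pow 2), natDegree_X_sub_C,
      natDegree_nodal_erase_sq hi]
    omega
  rw [hermiteTerm, add_mul, mul_assoc, coeff_add, coeff_C_mul, coeff_C_mul,
    coeff_eq_zero_of_natDegree_lt (by rw [natDegree_nodal_erase_sq hi]; omega), ← hdeg,
    hmonic.coeff_natDegree, mul_zero, mul_one, zero_add]

theorem eq_sum_hermiteTerm {P : K[X]} (hv : Set.InjOn v s) (hP : P.natDegree < 2 * #s) :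
    P = ∑ i ∈ s, hermiteTerm P s v i := by
  refine sub_eq_zero.1 (eq_zero_of_dvd_of_natDegree_lt (nodal_sq_dvd_sub_sum_hermiteTerm P hv) ?_)
  rw [natDegree_pow, natDegree_nodal]
  have := natDegree_sum_le_of_forall_le s (hermiteTerm P s v) fun i hi =>
    natDegree_hermiteTerm_le P hi
  exact (natDegree_sub_le _ _).trans_lt (max_lt hP (by omega))

theorem sum_doublePoleResidue_eq_coeff {P : K[X]} (hv : Set.InjOn v s)
    (hP : P.natDegree < 2 * #s) :
    ∑ i ∈ s, doublePoleResidue P (nodal (s.erase i) v) (v i) = P.coeff (2 * #s - 1) := by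
  conv_rhs => rw [eq_sum_hermiteTerm hv hP, finsetSum_coeff]
  exact (sum_congr rfl fun i hi => coeff_hermiteTerm P hi).symm

end Hermite

theorem sum_doublePoleResidue_disjSum_eq_coeff {ι κ : Type*} [DecidableEq ι] [DecidableEq κ]
    {t : Finset ι} {u : Finset κ} {x : ι → K} {a : κ → K} {P : K[X]} (hx : Set.InjOn x t)
    (ha : Set.InjOn a u) (hxa : ∀ i ∈ t, ∀ k ∈ u, x i ≠ a k)
    (hP : P.natDegree < 2 * (#t + #u)) :
    ∑ i ∈ t, doublePoleResidue P (nodal (t.erase i) x * nodal u a) (x i) +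
        ∑ k ∈ u, doublePoleResidue P (nodal t x * nodal (u.erase k) a) (a k) =
      P.coeff (2 * (#t + #u) - 1) := by
  have h := sum_doublePoleResidue_eq_coeff (hx.sumElim_disjSum ha hxa)
    (by rwa [card_disjSum])
  rw [sum_disjSum, card_disjSum] at h
  convert h using 3 with i hi k hk
  all_goals
    congr 2
    rw [← nodal_disjSum]
    congr 1
    ext (j | l) <;> simp

theorem doublePoleResidue_mul_eq_deriv_div {𝕜 : Type*} [NontriviallyNormedField 𝕜]
    (f U E : 𝕜[X]) {c : 𝕜} (hU : U.eval c ≠ 0) (hE : E.eval c ≠ 0) :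
    doublePoleResidue f (U * E) c =
      deriv (fun z => f.eval z / (E ^ 2 * ((X - C c) * U).derivative).eval z) c / U.eval c := by
  have hD : ((X - C c) * U).derivative.eval c = U.eval c := by
    simp [derivative_mul]
  have hD' : ((X - C c) * U).derivative.derivative.eval c = 2 * U.derivative.eval c := by
    simp [derivative_mul]
    ring
  rw [deriv_fun_div (Polynomial.differentiableAt f) (Polynomial.differentiableAt _)
    (by simp [hU, hE]), Polynomial.deriv, Polynomial.deriv, doublePoleResidue]
  generalize ((X - C c) * U).derivative = D at hD hD' ⊢
  simp only [derivative_mul, derivative_pow, eval_add, eval_mul, eval_pow, eval_C, hD, hD']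
  field_simp
  ring

theorem sum_residues_div_nodal_sq_eq_zero {𝕜 ι κ : Type*} [NontriviallyNormedField 𝕜]
    [DecidableEq ι] [DecidableEq κ] {t : Finset ι} {u : Finset κ} {x : ι → 𝕜} {a : κ → 𝕜}
    {P : 𝕜[X]} (hx : Set.InjOn x t) (ha : Set.InjOn a u) (hxa : ∀ i ∈ t, ∀ k ∈ u, x i ≠ a k)
    (hroot : ∀ k ∈ u, P.IsRoot (a k)) (hP : P.natDegree + 3 ≤ 2 * (#t + #u)) :
    ∑ i ∈ t, deriv (fun z => P.eval z / (nodal u a ^ 2 * (nodal t x).derivative).eval z) (x i) /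
          (nodal (t.erase i) x).eval (x i) +
        ∑ k ∈ u, P.derivative.eval (a k) /
          ((nodal t x).eval (a k) * (nodal (u.erase k) a).eval (a k)) ^ 2 = 0 := by
  have key := sum_doublePoleResidue_disjSum_eq_coeff (P := P) hx ha hxa (by omega)
  rw [coeff_eq_zero_of_natDegree_lt (by omega)] at key
  rw [← key]
  congr 1
  · refine sum_congr rfl fun i hi => ?_
    rw [nodal_eq_mul_nodal_erase hi]
    refine (doublePoleResidue_mul_eq_deriv_div _ _ _ ?_ ?_).symm
    · exact eval_nodal_not_at_node fun j hj h =>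
        (mem_erase.1 hj).1 (hx (mem_erase.1 hj).2 hi h.symm)
    · exact eval_nodal_not_at_node fun k hk => hxa i hi k hk
  · exact sum_congr rfl fun k hk => by rw [doublePoleResidue_of_isRoot (hroot k hk), eval_mul]

theorem sum_insert_insert_div_sq_mul_prod_erase {ι : Type*} [DecidableEq ι] {i₀ i₁ : ι}
    {S : Finset ι} (h₀₁ : i₀ ≠ i₁) (h₀ : i₀ ∉ S) (h₁ : i₁ ∉ S) (r w a : ι → K) :
    ∑ k ∈ insert i₀ (insert i₁ S),
        r k / (w k * ∏ l ∈ (insert i₀ (insert i₁ S)).erase k, (a k - a l)) ^ 2 =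
      r i₀ / ((a i₀ - a i₁) ^ 2 * w i₀ ^ 2 * (∏ l ∈ S, (a i₀ - a l)) ^ 2) +
      r i₁ / ((a i₀ - a i₁) ^ 2 * w i₁ ^ 2 * (∏ l ∈ S, (a i₁ - a l)) ^ 2) +
      ∑ k ∈ S, r k / ((a k - a i₀) ^ 2 * (a k - a i₁) ^ 2 * w k ^ 2 *
        (∏ l ∈ S.erase k, (a k - a l)) ^ 2) := by
  have h₀' : i₀ ∉ insert i₁ S := by simp [h₀₁, h₀]
  rw [sum_insert h₀', sum_insert h₁, erase_insert h₀', erase_insert_of_ne h₀₁,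
    erase_insert h₁, prod_insert h₁, prod_insert h₀, add_assoc]
  congr 1
  · ring
  congr 1
  · ring
  refine sum_congr rfl fun k hk => ?_
  have hk₀ : k ≠ i₀ := ne_of_mem_of_not_mem hk h₀
  have hk₁ : k ≠ i₁ := ne_of_mem_of_not_mem hk h₁
  rw [erase_insert_of_ne hk₀.symm, erase_insert_of_ne hk₁.symm,
    prod_insert (by simp [h₀₁, h₀]), prod_insert (by simp [h₁])]
  ring

end

/-- Lemma 3.2(1): the residue identity obtained by summing the residues of
`f(x) dx / ((x - a₁)²(x - a₂)² F(x)² Q²(x)²)`, where `f(z) = ∏ (z - bᵢ)`,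
`a_k = b_k` for `k = 1, …, g`, `F(z) = ∏ (z - xᵢ)`,
`Q²(z) = ∏_{k=m+1}^{g} (z - a_k)`, and
`G(z) = f(z)/((z - a₁)²(z - a₂)² Q²(z)² F'(z))`. -/
theorem residue_sum_identity (g m : ℕ) (hm : 2 ≤ m) (hmg : m ≤ g)
    (b : Fin (2 * g + 1) → ℂ) (a : Fin g → ℂ)
    (ha : ∀ k : Fin g, a k = b (Fin.castLE (by omega) k))
    (hadist : Set.InjOn a {k : Fin g | (k : ℕ) = 0 ∨ (k : ℕ) = 1 ∨ m ≤ (k : ℕ)})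
    (x : Fin m → ℂ) (hxinj : Function.Injective x)
    (hxa : ∀ i, ∀ k : Fin g, ((k : ℕ) = 0 ∨ (k : ℕ) = 1 ∨ m ≤ (k : ℕ)) → x i ≠ a k)
    (f : ℂ → ℂ) (hf : ∀ z, f z = ∏ i, (z - b i))
    (Fz : ℂ → ℂ) (hFz : ∀ z, Fz z = ∏ i, (z - x i))
    (Q2 : ℂ → ℂ)
    (hQ2 : ∀ z, Q2 z = ∏ k ∈ Finset.univ.filter fun k : Fin g => m ≤ (k : ℕ), (z - a k))
    (G : ℂ → ℂ)
    (hG : ∀ z, G z = f z /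
      ((z - a ⟨0, by omega⟩) ^ 2 * (z - a ⟨1, by omega⟩) ^ 2 * (Q2 z) ^ 2 * deriv Fz z)) :
    ∑ i, deriv G (x i) / (∏ k ∈ Finset.univ.erase i, (x i - x k)) =
      -(deriv f (a ⟨0, by omega⟩) /
          ((a ⟨0, by omega⟩ - a ⟨1, by omega⟩) ^ 2 * (Fz (a ⟨0, by omega⟩)) ^ 2 *
            (Q2 (a ⟨0, by omega⟩)) ^ 2) +
        deriv f (a ⟨1, by omega⟩) /
          ((a ⟨0, by omega⟩ - a ⟨1, by omega⟩) ^ 2 * (Fz (a ⟨1, by omega⟩)) ^ 2 *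
            (Q2 (a ⟨1, by omega⟩)) ^ 2) +
        ∑ k ∈ Finset.univ.filter fun k : Fin g => m ≤ (k : ℕ),
          deriv f (a k) /
            ((a k - a ⟨0, by omega⟩) ^ 2 * (a k - a ⟨1, by omega⟩) ^ 2 * (Fz (a k)) ^ 2 *
              (∏ l ∈ (Finset.univ.filter fun l : Fin g => m ≤ (l : ℕ)).erase k,
                (a k - a l)) ^ 2)) := by
  classical
  set i₀ : Fin g := ⟨0, by omega⟩
  set i₁ : Fin g := ⟨1, by omega⟩
  set S : Finset (Fin g) := univ.filter fun k : Fin g => m ≤ (k : ℕ)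
  have h₀₁ : i₀ ≠ i₁ := by simp [i₀, i₁, Fin.ext_iff]
  have h₀ : i₀ ∉ S := by simp [i₀, S]; omega
  have h₁ : i₁ ∉ S := by simp [i₁, S]; omega
  have h₀' : i₀ ∉ insert i₁ S := by simp [h₀₁, h₀]
  set A := insert i₀ (insert i₁ S)
  have hA : ∀ k ∈ A, (k : ℕ) = 0 ∨ (k : ℕ) = 1 ∨ m ≤ (k : ℕ) := by
    simp [A, S, i₀, i₁, Fin.ext_iff]
  have hf' : f = fun z => (nodal univ b).eval z := funext fun z => by rw [hf, eval_nodal]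
  have hFz' : Fz = fun z => (nodal univ x).eval z := funext fun z => by rw [hFz, eval_nodal]
  have hG' : G = fun z =>
      (nodal univ b).eval z / (nodal A a ^ 2 * (nodal univ x).derivative).eval z := by
    funext z
    rw [hG, hf', hFz', Polynomial.deriv, hQ2, nodal_insert_eq_nodal h₀',
      nodal_insert_eq_nodal h₁]
    simp only [eval_mul, eval_pow, eval_sub, eval_X, eval_C, eval_nodal]
    ring
  have key := sum_residues_div_nodal_sq_eq_zero (P := nodal univ b) (t := univ) (u := A)
    (by simpa using hxinj) (hadist.mono hA) (fun i _ k hk => hxa i k (hA k hk))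
    (fun k _ => by rw [ha]; exact eval_nodal_at_node (mem_univ _)) (by
      rw [natDegree_nodal, card_univ, Fintype.card_fin, card_univ, Fintype.card_fin,
        card_insert_of_notMem h₀', card_insert_of_notMem h₁, Fin.card_filter_le_val]
      omega)
  rw [← hG'] at key
  simp only [eval_nodal] at key
  rw [sum_insert_insert_div_sq_mul_prod_erase h₀₁ h₀ h₁] at key
  simp only [hQ2, hFz, hf', Polynomial.deriv]
  linear_combination key
end
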